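/- Two-dimensional x-direction capillarity summation identity: for every N ≥ 1 with h = 1/N and all periodic grid functions ρ, u : ZMod N × ZMod N → ℝ, ∑_{i,j} [ −(Δ_h ρ_{i,j})·∇ᶜ_x(ρu)_{i,j} + (1/2) u_{i,j}·∇⁻_x( (∇⁺_xρ)² )_{i,j} ] = ∑_{i,j} u_{i,j}·( ∇⁻_x( (ρ_{i,j}Δ_hρ_{i+1,j} + ρ_{i+1,j}Δ_hρ_{i,j})/2 ) − ∇ᶜ_xρ_{i,j}·Δ_{h,y}ρ_{i,j} ), where Δ_h = Δ_{h,x} + Δ_{h,y} is the full discrete Laplacian. -/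
import Mathlib


open Finset

noncomputable section

/-- Grid spacing `h = 1/N`. -/
def hh (N : ℕ) : ℝ := 1 / (N : ℝ)

/-- Central difference in `x`: `∇ᶜ_xφ_{i,j} = (φ_{i+1,j} − φ_{i−1,j})/(2h)`. -/
def dCx (N : ℕ) (φ : ZMod N × ZMod N → ℝ) (q : ZMod N × ZMod N) : ℝ :=
  (φ (q.1 + 1, q.2) - φ (q.1 - 1, q.2)) / (2 * hh N)

/-- Central difference in `y`: `∇ᶜ_yφ_{i,j} = (φ_{i,j+1} − φ_{i,j−1})/(2h)`. -/
def dCy (N : ℕ) (φ : ZMod N × ZMod N → ℝ) (q : ZMod N × ZMod N) : ℝ :=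
  (φ (q.1, q.2 + 1) - φ (q.1, q.2 - 1)) / (2 * hh N)

/-- Forward difference in `x`: `∇⁺_xφ_{i,j} = (φ_{i+1,j} − φ_{i,j})/h`. -/
def dPx (N : ℕ) (φ : ZMod N × ZMod N → ℝ) (q : ZMod N × ZMod N) : ℝ :=
  (φ (q.1 + 1, q.2) - φ q) / hh N

/-- Forward difference in `y`: `∇⁺_yφ_{i,j} = (φ_{i,j+1} − φ_{i,j})/h`. -/
def dPy (N : ℕ) (φ : ZMod N × ZMod N → ℝ) (q : ZMod N × ZMod N) : ℝ :=
  (φ (q.1, q.2 + 1) - φ q) / hh N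

/-- Backward difference in `x`: `∇⁻_xφ_{i,j} = (φ_{i,j} − φ_{i−1,j})/h`. -/
def dMx (N : ℕ) (φ : ZMod N × ZMod N → ℝ) (q : ZMod N × ZMod N) : ℝ :=
  (φ q - φ (q.1 - 1, q.2)) / hh N

/-- Backward difference in `y`: `∇⁻_yφ_{i,j} = (φ_{i,j} − φ_{i,j−1})/h`. -/
def dMy (N : ℕ) (φ : ZMod N × ZMod N → ℝ) (q : ZMod N × ZMod N) : ℝ :=
  (φ q - φ (q.1, q.2 - 1)) / hh N

/-- Discrete Laplacian in `x`: `Δ_{h,x}φ_{i,j} = (φ_{i+1,j} − 2φ_{i,j} + φ_{i−1,j})/h²`. -/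
def dLx (N : ℕ) (φ : ZMod N × ZMod N → ℝ) (q : ZMod N × ZMod N) : ℝ :=
  (φ (q.1 + 1, q.2) - 2 * φ q + φ (q.1 - 1, q.2)) / (hh N) ^ 2

/-- Discrete Laplacian in `y`: `Δ_{h,y}φ_{i,j} = (φ_{i,j+1} − 2φ_{i,j} + φ_{i,j−1})/h²`. -/
def dLy (N : ℕ) (φ : ZMod N × ZMod N → ℝ) (q : ZMod N × ZMod N) : ℝ :=
  (φ (q.1, q.2 + 1) - 2 * φ q + φ (q.1, q.2 - 1)) / (hh N) ^ 2

/-- Full discrete Laplacian `Δ_h = Δ_{h,x} + Δ_{h,y}`. -/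
def dL2 (N : ℕ) (φ : ZMod N × ZMod N → ℝ) (q : ZMod N × ZMod N) : ℝ :=
  dLx N φ q + dLy N φ q

/-- The capillarity bracket appearing in the `x`-momentum equation of the 2D scheme. -/
def Kx (N : ℕ) (ρ : ZMod N × ZMod N → ℝ) (q : ZMod N × ZMod N) : ℝ :=
  dMx N (fun r => (ρ r * dL2 N ρ (r.1 + 1, r.2) + ρ (r.1 + 1, r.2) * dL2 N ρ r) / 2) q
    - (1 / 2) * dMx N (fun r => (dPx N ρ r) ^ 2) q
    + (1 / 2) * dMx N (fun r => dMy N ρ (r.1 + 1, r.2) * dMy N ρ r) q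
    - dMy N (fun r => dCx N ρ r * dPy N ρ r) q

/-- The capillarity bracket appearing in the `y`-momentum equation of the 2D scheme
(the symmetric expression with the roles of `x` and `y` interchanged). -/
def Ky (N : ℕ) (ρ : ZMod N × ZMod N → ℝ) (q : ZMod N × ZMod N) : ℝ :=
  dMy N (fun r => (ρ r * dL2 N ρ (r.1, r.2 + 1) + ρ (r.1, r.2 + 1) * dL2 N ρ r) / 2) q
    - (1 / 2) * dMy N (fun r => (dPy N ρ r) ^ 2) q
    + (1 / 2) * dMy N (fun r => dMx N ρ (r.1, r.2 + 1) * dMx N ρ r) q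
    - dMx N (fun r => dCy N ρ r * dPx N ρ r) q

/-- Right-hand side of the 2D semidiscrete density equation: `−dρ_{i,j}/dt = F2rho`. -/
def F2rho (N : ℕ) (lamt : ℝ) (ρ m n : ZMod N × ZMod N → ℝ) (q : ZMod N × ZMod N) : ℝ :=
  dCx N (fun r => ρ r * (m r / ρ r)) q + dCy N (fun r => ρ r * (n r / ρ r)) q
    - lamt * hh N * dL2 N ρ q

/-- Right-hand side of the 2D semidiscrete `x`-momentum equation: `−dm_{i,j}/dt = F2m`. -/
def F2m (N : ℕ) (p : ℝ → ℝ) (μ κ lamt : ℝ) (ρ m n : ZMod N × ZMod N → ℝ)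
    (q : ZMod N × ZMod N) : ℝ :=
  dCx N (fun r => ρ r * (m r / ρ r) ^ 2) q
    + dCy N (fun r => ρ r * (m r / ρ r) * (n r / ρ r)) q
    + dCx N (fun r => p (ρ r)) q
    - μ * dL2 N (fun r => m r / ρ r) q
    - lamt * hh N * dL2 N m q
    - κ * Kx N ρ q

/-- Right-hand side of the 2D semidiscrete `y`-momentum equation: `−dn_{i,j}/dt = F2n`. -/
def F2n (N : ℕ) (p : ℝ → ℝ) (μ κ lamt : ℝ) (ρ m n : ZMod N × ZMod N → ℝ)
    (q : ZMod N × ZMod N) : ℝ :=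
  dCy N (fun r => ρ r * (n r / ρ r) ^ 2) q
    + dCx N (fun r => ρ r * (m r / ρ r) * (n r / ρ r)) q
    + dCy N (fun r => p (ρ r)) q
    - μ * dL2 N (fun r => n r / ρ r) q
    - lamt * hh N * dL2 N n q
    - κ * Ky N ρ q

/-- Two-dimensional `x`-direction capillarity summation identity. -/
theorem capillarity_summation_identity_2d
    (N : ℕ) [NeZero N] (ρ u : ZMod N × ZMod N → ℝ) :
    ∑ q : ZMod N × ZMod N,
        (-(dL2 N ρ q) * dCx N (fun r => ρ r * u r) q
          + (1 / 2) * u q * dMx N (fun r => (dPx N ρ r) ^ 2) q)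
      = ∑ q : ZMod N × ZMod N,
          u q * (dMx N (fun r =>
              (ρ r * dL2 N ρ (r.1 + 1, r.2) + ρ (r.1 + 1, r.2) * dL2 N ρ r) / 2) q
            - dCx N ρ q * dLy N ρ q) := by
  classical
  -- shift invariance of sums over the torus
  have hshift : ∀ f : ZMod N × ZMod N → ℝ,
      ∑ q : ZMod N × ZMod N, f (q.1 + 1, q.2) = ∑ q : ZMod N × ZMod N, f q := by
    intro f
    exact Fintype.sum_equiv ((Equiv.addRight (1 : ZMod N)).prodCongr (Equiv.refl _))
      _ _ (fun q => rfl)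
  have hshift' : ∀ f : ZMod N × ZMod N → ℝ,
      ∑ q : ZMod N × ZMod N, f (q.1 - 1, q.2) = ∑ q : ZMod N × ZMod N, f q := by
    intro f
    exact Fintype.sum_equiv ((Equiv.subRight (1 : ZMod N)).prodCongr (Equiv.refl _))
      _ _ (fun q => rfl)
  -- summation by parts on the first term
  have key : ∑ q : ZMod N × ZMod N, (-(dL2 N ρ q) * dCx N (fun r => ρ r * u r) q)
      = ∑ q : ZMod N × ZMod N,
          (u q * ρ q * ((dL2 N ρ (q.1 + 1, q.2) - dL2 N ρ (q.1 - 1, q.2)) / (2 * hh N))) := by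
    have e1 : ∑ q : ZMod N × ZMod N,
        (-(dL2 N ρ (q.1 - 1, q.2)) * (ρ q * u q) / (2 * hh N))
        = ∑ q : ZMod N × ZMod N,
          (-(dL2 N ρ q) * (ρ (q.1 + 1, q.2) * u (q.1 + 1, q.2)) / (2 * hh N)) := by
      rw [← hshift (fun q => -(dL2 N ρ (q.1 - 1, q.2)) * (ρ q * u q) / (2 * hh N))]
      refine Finset.sum_congr rfl fun q _ => ?_
      simp [add_sub_cancel_right]
    have e2 : ∑ q : ZMod N × ZMod N,
        (dL2 N ρ (q.1 + 1, q.2) * (ρ q * u q) / (2 * hh N))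
        = ∑ q : ZMod N × ZMod N,
          (dL2 N ρ q * (ρ (q.1 - 1, q.2) * u (q.1 - 1, q.2)) / (2 * hh N)) := by
      rw [← hshift' (fun q => dL2 N ρ (q.1 + 1, q.2) * (ρ q * u q) / (2 * hh N))]
      refine Finset.sum_congr rfl fun q _ => ?_
      simp [sub_add_cancel]
    calc ∑ q : ZMod N × ZMod N, (-(dL2 N ρ q) * dCx N (fun r => ρ r * u r) q)
        = ∑ q : ZMod N × ZMod N,
            (-(dL2 N ρ q) * (ρ (q.1 + 1, q.2) * u (q.1 + 1, q.2)) / (2 * hh N)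
              + dL2 N ρ q * (ρ (q.1 - 1, q.2) * u (q.1 - 1, q.2)) / (2 * hh N)) := by
          refine Finset.sum_congr rfl fun q _ => ?_
          simp only [dCx]; ring
      _ = ∑ q : ZMod N × ZMod N,
            (-(dL2 N ρ (q.1 - 1, q.2)) * (ρ q * u q) / (2 * hh N)
              + dL2 N ρ (q.1 + 1, q.2) * (ρ q * u q) / (2 * hh N)) := by
          rw [Finset.sum_add_distrib, Finset.sum_add_distrib, e1, e2]
      _ = _ := by
          refine Finset.sum_congr rfl fun q _ => ?_
          ring
  calc ∑ q : ZMod N × ZMod N,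
        (-(dL2 N ρ q) * dCx N (fun r => ρ r * u r) q
          + (1 / 2) * u q * dMx N (fun r => (dPx N ρ r) ^ 2) q)
      = ∑ q : ZMod N × ZMod N, (-(dL2 N ρ q) * dCx N (fun r => ρ r * u r) q)
        + ∑ q : ZMod N × ZMod N, ((1 / 2) * u q * dMx N (fun r => (dPx N ρ r) ^ 2) q) := by
        rw [Finset.sum_add_distrib]
    _ = ∑ q : ZMod N × ZMod N,
          (u q * ρ q * ((dL2 N ρ (q.1 + 1, q.2) - dL2 N ρ (q.1 - 1, q.2)) / (2 * hh N)))
        + ∑ q : ZMod N × ZMod N, ((1 / 2) * u q * dMx N (fun r => (dPx N ρ r) ^ 2) q) := by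
        rw [key]
    _ = ∑ q : ZMod N × ZMod N,
          (u q * ρ q * ((dL2 N ρ (q.1 + 1, q.2) - dL2 N ρ (q.1 - 1, q.2)) / (2 * hh N))
            + (1 / 2) * u q * dMx N (fun r => (dPx N ρ r) ^ 2) q) := by
        rw [Finset.sum_add_distrib]
    _ = _ := by
        refine Finset.sum_congr rfl fun q _ => ?_
        simp only [dMx, dPx, dCx, dL2, dLx, dLy, add_sub_cancel_right, sub_add_cancel]
        ring
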